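/- For every natural number m and every real θ, ∑_{k=0}^{m} h_{2m+1,k} 2^{-k} [θ+1]_{m-k} = (θ - 1/2)_m, where h_{n,k} = (-1)^k C(n,2k) (2k)!/(2^k k!), [x]_n is the rising factorial, and (x)_n is the falling factorial. -/
import Mathlib


open Finset

/-- Hermite polynomial coefficient `h_{n,k} = (-1)^k C(n,2k) (2k)!/(2^k k!)`. -/
noncomputable def hermiteCoeff (n k : ℕ) : ℝ :=
  (-1) ^ k * (n.choose (2 * k)) * (Nat.factorial (2 * k)) / (2 ^ k * Nat.factorial k)

/-- Rising factorial `[x]_n = x(x+1)⋯(x+n-1)`. -/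
noncomputable def risingFac (x : ℝ) (n : ℕ) : ℝ := ∏ j ∈ Finset.range n, (x + j)

/-- Falling factorial `(x)_n = x(x-1)⋯(x-n+1)`. -/
noncomputable def fallingFac (x : ℝ) (n : ℕ) : ℝ := ∏ j ∈ Finset.range n, (x - j)

lemma hermiteCoeff_desc (n k : ℕ) :
    hermiteCoeff n k = (-1) ^ k * (n.descFactorial (2 * k)) / (2 ^ k * Nat.factorial k) := by
  rw [hermiteCoeff, Nat.descFactorial_eq_factorial_mul_choose]
  push_cast
  ring

lemma hermiteCoeff_zero (n : ℕ) : hermiteCoeff n 0 = 1 := by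
  simp [hermiteCoeff, Nat.factorial]

lemma hermiteCoeff_top (m : ℕ) : hermiteCoeff (2 * m + 1) (m + 1) = 0 := by
  rw [hermiteCoeff, Nat.choose_eq_zero_of_lt (by omega)]
  simp

lemma risingFac_succ (x : ℝ) (n : ℕ) :
    risingFac x (n + 1) = risingFac x n * (x + n) := by
  simp [risingFac, Finset.prod_range_succ]

/-- Key coefficient recurrence. -/
lemma coeff_rec (m k : ℕ) (hk : k ≤ m) :
    hermiteCoeff (2 * (m + 1) + 1) (k + 1) * 2⁻¹ ^ (k + 1)
      = hermiteCoeff (2 * m + 1) (k + 1) * 2⁻¹ ^ (k + 1)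
        - (2 * (m : ℝ) + 3 / 2 - k) * (hermiteCoeff (2 * m + 1) k * 2⁻¹ ^ k) := by
  obtain ⟨t, rfl⟩ : ∃ t, m = k + t := ⟨m - k, by omega⟩
  have hD : (2 * (k + t + 1) + 1).descFactorial (2 * (k + 1))
      = (2 * (k + t) + 3) * ((2 * (k + t) + 2) * ((2 * (k + t) + 1).descFactorial (2 * k))) := by
    rw [show 2 * (k + t + 1) + 1 = (2 * (k + t) + 2) + 1 from by ring,
        show 2 * (k + 1) = (2 * k + 1) + 1 from by ring,
        Nat.succ_descFactorial_succ,
        show 2 * (k + t) + 2 = (2 * (k + t) + 1) + 1 from by ring,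
        Nat.succ_descFactorial_succ]
  have hD1 : (2 * (k + t) + 1).descFactorial (2 * (k + 1))
      = (2 * t) * ((2 * t + 1) * ((2 * (k + t) + 1).descFactorial (2 * k))) := by
    rw [show 2 * (k + 1) = (2 * k + 1) + 1 from by ring, Nat.descFactorial_succ,
        Nat.descFactorial_succ, show 2 * (k + t) + 1 - (2 * k + 1) = 2 * t from by omega,
        show 2 * (k + t) + 1 - 2 * k = 2 * t + 1 from by omega]
  rw [hermiteCoeff_desc, hermiteCoeff_desc, hermiteCoeff_desc, hD, hD1]
  have h2 : ((2 : ℝ) ^ (k + 1) * Nat.factorial (k + 1)) ≠ 0 := by positivity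
  have h3 : ((2 : ℝ) ^ k * Nat.factorial k) ≠ 0 := by positivity
  rw [Nat.factorial_succ]
  push_cast
  field_simp
  ring

theorem odd_hermite_coeff_rising_falling (m : ℕ) (θ : ℝ) :
    ∑ k ∈ Finset.range (m + 1),
      hermiteCoeff (2 * m + 1) k * 2⁻¹ ^ k * risingFac (θ + 1) (m - k)
    = fallingFac (θ - 1 / 2) m := by
  induction m with
  | zero => simp [hermiteCoeff, risingFac, fallingFac, Nat.factorial]
  | succ m ih =>
    have hfall : fallingFac (θ - 1 / 2) (m + 1)
        = fallingFac (θ - 1 / 2) m * (θ - 1 / 2 - m) := by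
      simp [fallingFac, Finset.prod_range_succ]
    rw [hfall, ← ih, Finset.sum_mul]
    rw [Finset.sum_range_succ']
    -- abbreviations
    set A : ℕ → ℕ → ℝ := fun n k => hermiteCoeff (2 * n + 1) k * 2⁻¹ ^ k with hA
    have hstep : ∀ k ∈ Finset.range (m + 1),
        hermiteCoeff (2 * (m + 1) + 1) (k + 1) * 2⁻¹ ^ (k + 1)
            * risingFac (θ + 1) (m + 1 - (k + 1))
        = A m (k + 1) * risingFac (θ + 1) (m + 1 - (k + 1))
          - (2 * (m : ℝ) + 3 / 2 - k) * (A m k * risingFac (θ + 1) (m - k)) := by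
      intro k hk
      rw [Finset.mem_range] at hk
      have hk' : k ≤ m := by omega
      rw [show m + 1 - (k + 1) = m - k from by omega, coeff_rec m k hk']
      ring
    rw [Finset.sum_congr rfl hstep, Finset.sum_sub_distrib]
    have hshift : ∑ k ∈ Finset.range (m + 1), A m (k + 1) * risingFac (θ + 1) (m + 1 - (k + 1))
        = (∑ k ∈ Finset.range (m + 1), A m k * risingFac (θ + 1) (m + 1 - k))
          + A m (m + 1) * risingFac (θ + 1) (m + 1 - (m + 1))
          - A m 0 * risingFac (θ + 1) (m + 1) := by
      have := Finset.sum_range_succ' (fun k => A m k * risingFac (θ + 1) (m + 1 - k)) (m + 1)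
      rw [Finset.sum_range_succ] at this
      simp only [Nat.sub_zero] at this ⊢
      linarith [this]
    rw [hshift]
    have hAtop : A m (m + 1) = 0 := by simp [hA, hermiteCoeff_top]
    have hA0 : ∀ n, A n 0 = 1 := by intro n; simp [hA, hermiteCoeff_zero]
    have hA0' : hermiteCoeff (2 * (m + 1) + 1) 0 * 2⁻¹ ^ 0 = 1 := by
      simp [hermiteCoeff_zero]
    rw [hAtop, hA0, hA0']
    have hfinal : ∀ k ∈ Finset.range (m + 1),
        A m k * risingFac (θ + 1) (m + 1 - k)
          - (2 * (m : ℝ) + 3 / 2 - k) * (A m k * risingFac (θ + 1) (m - k))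
        = A m k * risingFac (θ + 1) (m - k) * (θ - 1 / 2 - m) := by
      intro k hk
      rw [Finset.mem_range] at hk
      have hk' : k ≤ m := by omega
      rw [show m + 1 - k = (m - k) + 1 from by omega, risingFac_succ]
      have hc : ((m - k : ℕ) : ℝ) = (m : ℝ) - k := by
        rw [Nat.cast_sub hk']
      rw [hc]
      ring
    rw [← Finset.sum_congr rfl hfinal, Finset.sum_sub_distrib]
    simp only [Nat.sub_zero, zero_mul, one_mul]
    ring
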